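/- arXiv:2504.02042 — 2 statements merged into one kernel-verified Lean document; each statement's English description precedes it below -/
import Mathlib

section
/- (Lemma 2 for states.) Let ξ be a bipartite density matrix on H_A ⊗ H_B that violates a Bell inequality: there exist POVMs {M^{a|x}} on H_A and {N^{b|y}} on H_B such that Σ B(a,b,x,y)·Tr[(M^{a|x} ⊗ N^{b|y}) ξ] > S_l, where S_l is the local bound of B. Then for any 0 < t ≤ 1, any density matrix σ on H_A ⊗ H_B, and classical register states |0⟩⟨0|, |1⟩⟨1| on ℂ² ⊗ ℂ², the state τ = t·ξ ⊗ |00⟩⟨00| + (1−t)·σ ⊗ |11⟩⟨11| on (H_A ⊗ ℂ²) ⊗ (H_B ⊗ ℂ²) violates the same Bell inequality: there exist local POVMs on H_A ⊗ ℂ² and H_B ⊗ ℂ² whose Bell value on τ exceeds S_l. -/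
open Finset Matrix ComplexOrder

/-- A family of operators `M x a` is a POVM (for each setting `x`). -/
def IsPOVM {n : Type} [Fintype n] [DecidableEq n] {A X : Type} [Fintype A]
    (M : X → A → Matrix n n ℂ) : Prop :=
  (∀ x a, (M x a).PosSemidef) ∧ (∀ x, ∑ a, M x a = 1)

/-- The Bell value obtained by measuring the bipartite state `ρ` with local
POVMs `M` and `N`, for Bell coefficients `Bc`. -/
noncomputable def bellValState {nA nB : Type} [Fintype nA] [Fintype nB]
    {A B X Y : Type} [Fintype A] [Fintype B] [Fintype X] [Fintype Y]
    (Bc : A → B → X → Y → ℝ)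
    (M : X → A → Matrix nA nA ℂ) (N : Y → B → Matrix nB nB ℂ)
    (ρ : Matrix (nA × nB) (nA × nB) ℂ) : ℝ :=
  (∑ a, ∑ b, ∑ x, ∑ y,
      (Bc a b x y : ℂ) * (Matrix.kroneckerMap (· * ·) (M x a) (N y b) * ρ).trace).re

/-- The local bound: the maximal Bell value over deterministic local strategies. -/
noncomputable def localBound {A B X Y : Type} [Fintype A] [Fintype B] [Fintype X] [Fintype Y]
    [Nonempty A] [Nonempty B] [DecidableEq X] [DecidableEq Y]
    (Bc : A → B → X → Y → ℝ) : ℝ :=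
  Finset.univ.sup' Finset.univ_nonempty
    (fun fg : (X → A) × (Y → B) => ∑ x, ∑ y, Bc (fg.1 x) (fg.2 y) x y)

/-- The flagged mixture `t • ξ ⊗ |00⟩⟨00| + (1-t) • σ ⊗ |11⟩⟨11|`, with each party
holding its system together with its one-qubit classical register. -/
noncomputable def flagState {dA dB : ℕ} (t : ℝ)
    (ξ σ : Matrix (Fin dA × Fin dB) (Fin dA × Fin dB) ℂ) :
    Matrix ((Fin dA × Fin 2) × (Fin dB × Fin 2)) ((Fin dA × Fin 2) × (Fin dB × Fin 2)) ℂ :=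
  fun p q =>
    (t : ℂ) * ξ (p.1.1, p.2.1) (q.1.1, q.2.1) *
        (if p.1.2 = 0 ∧ p.2.2 = 0 ∧ q.1.2 = 0 ∧ q.2.2 = 0 then 1 else 0) +
      ((1 : ℂ) - t) * σ (p.1.1, p.2.1) (q.1.1, q.2.1) *
        (if p.1.2 = 1 ∧ p.2.2 = 1 ∧ q.1.2 = 1 ∧ q.2.2 = 1 then 1 else 0)

/-!
Each party measures a POVM controlled by its register: on sector `0` the violating POVM, on
sector `1` the answers of an optimal deterministic strategy `(f, g)`. The flagged state has no
coherence between the sectors `00` and `11`, so its Bell value is the mixture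
`t · β(ξ) + (1 - t) · S_l` of the two sector values, and this exceeds `S_l` since `t > 0` and
`β(ξ) > S_l`.
-/

open scoped MatrixOrder in
theorem Matrix.PosSemidef.blockDiagonal {𝕜 m o : Type*} [RCLike 𝕜] [Fintype m] [DecidableEq m]
    [Fintype o] [DecidableEq o] {M : o → Matrix m m 𝕜} (hM : ∀ r, (M r).PosSemidef) :
    (Matrix.blockDiagonal M).PosSemidef := by
  choose B hB using fun r => CStarAlgebra.nonneg_iff_eq_star_mul_self.mp (hM r).nonneg
  obtain rfl : M = fun r => (B r)ᴴ * B r := funext hB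
  rw [blockDiagonal_mul, ← blockDiagonal_conjTranspose]
  exact posSemidef_conjTranspose_mul_self _

def controlledPOVM {n o A X : Type} [DecidableEq o] (M : o → X → A → Matrix n n ℂ) :
    X → A → Matrix (n × o) (n × o) ℂ :=
  fun x a => blockDiagonal fun r => M r x a

theorem IsPOVM.controlled {n o A X : Type} [Fintype n] [DecidableEq n] [Fintype o]
    [DecidableEq o] [Fintype A] {M : o → X → A → Matrix n n ℂ} (hM : ∀ r, IsPOVM (M r)) :
    IsPOVM (controlledPOVM M) := by
  refine ⟨fun x a => PosSemidef.blockDiagonal fun r => (hM r).1 x a, fun x => ?_⟩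
  calc ∑ a, blockDiagonal (fun r => M r x a)
      = blockDiagonal (∑ a, fun r => M r x a) :=
        (map_sum (blockDiagonalAddMonoidHom n n o ℂ) (fun a r => M r x a) univ).symm
    _ = blockDiagonal 1 := by
        congr 1
        ext1 r
        simp [Finset.sum_apply, (hM r).2 x]
    _ = 1 := blockDiagonal_one

def deterministicPOVM {n A X : Type} [DecidableEq n] [DecidableEq A] (f : X → A) :
    X → A → Matrix n n ℂ :=
  fun x a => if a = f x then 1 else 0

theorem isPOVM_deterministicPOVM {n A X : Type} [Fintype n] [DecidableEq n] [Fintype A]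
    [DecidableEq A] (f : X → A) : IsPOVM (deterministicPOVM (n := n) f) := by
  refine ⟨fun x a => ?_, fun x => by simp [deterministicPOVM]⟩
  unfold deterministicPOVM
  split_ifs
  exacts [.one, .zero]

theorem kroneckerMap_deterministicPOVM {nA nB A B X Y : Type} [DecidableEq nA] [DecidableEq nB]
    [DecidableEq A] [DecidableEq B] (f : X → A) (g : Y → B) (x : X) (y : Y) (a : A) (b : B) :
    kroneckerMap (· * ·) (deterministicPOVM (n := nA) f x a) (deterministicPOVM (n := nB) g y b) =
      if a = f x ∧ b = g y then 1 else 0 := by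
  unfold deterministicPOVM
  split_ifs <;> simp_all [kroneckerMap_one_one]

theorem bellValState_deterministicPOVM {nA nB A B X Y : Type} [Fintype nA] [Fintype nB]
    [DecidableEq nA] [DecidableEq nB] [Fintype A] [Fintype B] [Fintype X] [Fintype Y]
    [DecidableEq A] [DecidableEq B] (Bc : A → B → X → Y → ℝ) (f : X → A) (g : Y → B)
    (ρ : Matrix (nA × nB) (nA × nB) ℂ) :
    bellValState Bc (deterministicPOVM f) (deterministicPOVM g) ρ =
      (∑ x, ∑ y, Bc (f x) (g y) x y) * ρ.trace.re := by
  simp_rw [bellValState, sum_comm (s := (univ : Finset B)) (t := (univ : Finset X)),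
    sum_comm (s := (univ : Finset B)) (t := (univ : Finset Y)),
    sum_comm (s := (univ : Finset A)) (t := (univ : Finset X)),
    sum_comm (s := (univ : Finset A)) (t := (univ : Finset Y))]
  simp [kroneckerMap_deterministicPOVM, ite_and, apply_ite, sum_mul]

theorem exists_localBound_eq {A B X Y : Type} [Fintype A] [Fintype B] [Fintype X] [Fintype Y]
    [Nonempty A] [Nonempty B] [DecidableEq X] [DecidableEq Y] (Bc : A → B → X → Y → ℝ) :
    ∃ (f : X → A) (g : Y → B), localBound Bc = ∑ x, ∑ y, Bc (f x) (g y) x y := by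
  obtain ⟨fg, -, h⟩ := exists_mem_eq_sup' univ_nonempty
    (fun fg : (X → A) × (Y → B) => ∑ x, ∑ y, Bc (fg.1 x) (fg.2 y) x y)
  exact ⟨fg.1, fg.2, h⟩

theorem trace_kronecker_mul_flagState {dA dB : ℕ} (t : ℝ)
    (ξ σ : Matrix (Fin dA × Fin dB) (Fin dA × Fin dB) ℂ)
    (P : Matrix (Fin dA × Fin 2) (Fin dA × Fin 2) ℂ)
    (Q : Matrix (Fin dB × Fin 2) (Fin dB × Fin 2) ℂ) :
    (kroneckerMap (· * ·) P Q * flagState t ξ σ).trace =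
      t * (kroneckerMap (· * ·) (P.blockDiag 0) (Q.blockDiag 0) * ξ).trace +
        (1 - t) * (kroneckerMap (· * ·) (P.blockDiag 1) (Q.blockDiag 1) * σ).trace := by
  simp [trace, mul_apply, flagState, Fintype.sum_prod_type, Fin.sum_univ_two, blockDiag, mul_sum,
    sum_add_distrib, mul_left_comm]

theorem bellValState_flagState {dA dB : ℕ} {A B X Y : Type} [Fintype A] [Fintype B] [Fintype X]
    [Fintype Y] (Bc : A → B → X → Y → ℝ) (t : ℝ)
    (ξ σ : Matrix (Fin dA × Fin dB) (Fin dA × Fin dB) ℂ)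
    (M : X → A → Matrix (Fin dA × Fin 2) (Fin dA × Fin 2) ℂ)
    (N : Y → B → Matrix (Fin dB × Fin 2) (Fin dB × Fin 2) ℂ) :
    bellValState Bc M N (flagState t ξ σ) =
      t * bellValState Bc (fun x a => (M x a).blockDiag 0) (fun y b => (N y b).blockDiag 0) ξ +
        (1 - t) *
          bellValState Bc (fun x a => (M x a).blockDiag 1) (fun y b => (N y b).blockDiag 1) σ := by
  simp only [bellValState, trace_kronecker_mul_flagState, ← Complex.ofReal_one,
    ← Complex.ofReal_sub]
  simp only [mul_add, sum_add_distrib, mul_left_comm _ (t : ℂ), mul_left_comm _ ((1 - t : ℝ) : ℂ),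
    ← mul_sum, Complex.add_re, Complex.re_ofReal_mul]

theorem stmt_5_general {dA dB : ℕ} {A B X Y : Type} [Fintype A] [Fintype B] [Fintype X] [Fintype Y]
    [Nonempty A] [Nonempty B]
    [DecidableEq X] [DecidableEq Y]
    (Bc : A → B → X → Y → ℝ)
    (ξ σ : Matrix (Fin dA × Fin dB) (Fin dA × Fin dB) ℂ)
    (hσ : σ.PosSemidef ∧ σ.trace = 1)
    (M : X → A → Matrix (Fin dA) (Fin dA) ℂ) (N : Y → B → Matrix (Fin dB) (Fin dB) ℂ)
    (hM : IsPOVM M) (hN : IsPOVM N)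
    (hviol : localBound Bc < bellValState Bc M N ξ)
    (t : ℝ) (ht0 : 0 < t) :
    ∃ (M' : X → A → Matrix (Fin dA × Fin 2) (Fin dA × Fin 2) ℂ)
      (N' : Y → B → Matrix (Fin dB × Fin 2) (Fin dB × Fin 2) ℂ),
      IsPOVM M' ∧ IsPOVM N' ∧
        localBound Bc < bellValState Bc M' N' (flagState t ξ σ) := by
  classical
  obtain ⟨f, g, hfg⟩ := exists_localBound_eq Bc
  let M' := controlledPOVM ![M, deterministicPOVM f]
  let N' := controlledPOVM ![N, deterministicPOVM g]
  have hval : bellValState Bc M' N' (flagState t ξ σ) =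
      t * bellValState Bc M N ξ + (1 - t) * localBound Bc := by
    simp [M', N', bellValState_flagState, controlledPOVM, blockDiag_blockDiagonal,
      bellValState_deterministicPOVM, hσ.2, hfg]
  refine ⟨M', N', .controlled (Fin.forall_fin_two.2 ⟨hM, isPOVM_deterministicPOVM f⟩),
    .controlled (Fin.forall_fin_two.2 ⟨hN, isPOVM_deterministicPOVM g⟩), ?_⟩
  rw [hval]
  nlinarith

theorem stmt_5 {dA dB : ℕ} {A B X Y : Type} [Fintype A] [Fintype B] [Fintype X] [Fintype Y]
    [Nonempty A] [Nonempty B] [Nonempty X] [Nonempty Y]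
    [DecidableEq X] [DecidableEq Y]
    (Bc : A → B → X → Y → ℝ)
    (ξ σ : Matrix (Fin dA × Fin dB) (Fin dA × Fin dB) ℂ)
    (hξ : ξ.PosSemidef ∧ ξ.trace = 1) (hσ : σ.PosSemidef ∧ σ.trace = 1)
    (M : X → A → Matrix (Fin dA) (Fin dA) ℂ) (N : Y → B → Matrix (Fin dB) (Fin dB) ℂ)
    (hM : IsPOVM M) (hN : IsPOVM N)
    (hviol : localBound Bc < bellValState Bc M N ξ)
    (t : ℝ) (ht0 : 0 < t) (ht1 : t ≤ 1) :
    ∃ (M' : X → A → Matrix (Fin dA × Fin 2) (Fin dA × Fin 2) ℂ)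
      (N' : Y → B → Matrix (Fin dB × Fin 2) (Fin dB × Fin 2) ℂ),
      IsPOVM M' ∧ IsPOVM N' ∧
        localBound Bc < bellValState Bc M' N' (flagState t ξ σ) :=
  stmt_5_general Bc ξ σ hσ M N hM hN hviol t ht0
end

section
/- (Lemma 1, classical probabilistic form, general n.) Fix n ≥ 1 and elements ρ, σ of a type S. Let the catalyst be the uniform distribution ω = (1/n) Σ_{i=0}^{n−1} δ_{(c_i, i)} over S^{n−1} × Fin n, where c_i ∈ S^{n−1} is the tuple whose first i entries are ρ and remaining n−1−i entries are σ. Then there is a function T : S × (S^{n−1} × Fin n) → (S^n × {0,1}) × (S^{n−1} × Fin n) such that the pushforward of δ_ρ ⊗ ω under T has catalyst-marginal equal to ω and system-marginal equal to (1/n)·δ_{((ρ,…,ρ),0)} + ((n−1)/n)·δ_{((σ,…,σ),1)}. Specifically, T(ρ, (c_{n−1}, n−1)) = (((ρ,…,ρ),0), (c_0, 0)) and T(ρ, (c_i, i)) = (((σ,…,σ),1), (c_{i+1}, i+1)) for i < n−1. -/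
open PMF

lemma uniform_map_equiv {α : Type*} [Fintype α] [Nonempty α] (e : α ≃ α) :
    (PMF.uniformOfFintype α).map e = PMF.uniformOfFintype α := by
  ext x
  rw [PMF.map_apply]
  rw [tsum_eq_single (e.symm x) (by
    intro b hb
    simp only [PMF.uniformOfFintype_apply]
    rw [if_neg]
    intro h
    exact hb (by simp [h]))]
  simp [PMF.uniformOfFintype_apply]

theorem stmt_7 {S : Type} (n : ℕ) (ρ σ : S)
    -- `c i` is the tuple with `i` copies of ρ followed by `n - i` copies of σ
    -- (there are `n + 1` copies in total, i.e. the paper's `n` is `n + 1 ≥ 1` here)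
    (c : Fin (n + 1) → Fin n → S)
    (hc : ∀ i k, c i k = if (k : ℕ) < (i : ℕ) then ρ else σ)
    -- the catalyst ω = (1/(n+1)) Σ_i δ_{(c_i, i)}
    (ω : PMF ((Fin n → S) × Fin (n + 1)))
    (hω : ω = (PMF.uniformOfFintype (Fin (n + 1))).map (fun i => (c i, i))) :
    ∃ T : S × ((Fin n → S) × Fin (n + 1)) →
        ((Fin (n + 1) → S) × Fin 2) × ((Fin n → S) × Fin (n + 1)),
      -- the concrete action of the protocol
      (T (ρ, (c (Fin.last n), Fin.last n)) =
        (((fun _ => ρ), 0), (c 0, 0))) ∧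
      (∀ i : Fin (n + 1), (i : ℕ) < n →
        T (ρ, (c i, i)) = (((fun _ => σ), 1), (c (i + 1), i + 1))) ∧
      -- the catalyst marginal of the image of δ_ρ ⊗ ω is ω
      ((ω.map (fun cat => (ρ, cat))).map T).map Prod.snd = ω ∧
      -- the system marginal is (1/(n+1)) δ_{((ρ,…,ρ),0)} + (n/(n+1)) δ_{((σ,…,σ),1)}
      ((ω.map (fun cat => (ρ, cat))).map T).map Prod.fst =
        (PMF.uniformOfFintype (Fin (n + 1))).map
          (fun i => if (i : ℕ) = n then (((fun _ => ρ), (0 : Fin 2)))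
            else (((fun _ => σ), (1 : Fin 2)))) := by
  refine ⟨fun p => if p.2.2 = Fin.last n then (((fun _ : Fin (n + 1) => ρ), 0), (c 0, 0))
      else (((fun _ : Fin (n + 1) => σ), 1), (c (p.2.2 + 1), p.2.2 + 1)), ?_, ?_, ?_, ?_⟩
  · simp
  · intro i hi
    simp only
    rw [if_neg]
    exact fun h => absurd (h ▸ hi) (by simp)
  · subst hω
    rw [PMF.map_comp, PMF.map_comp, PMF.map_comp]
    have : ((Prod.snd ∘ fun p : S × ((Fin n → S) × Fin (n + 1)) =>
        if p.2.2 = Fin.last n then (((fun _ : Fin (n + 1) => ρ), (0 : Fin 2)), (c 0, 0))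
        else (((fun _ : Fin (n + 1) => σ), 1), (c (p.2.2 + 1), p.2.2 + 1))) ∘
        (fun cat => (ρ, cat)) ∘ fun i => (c i, i)) =
        (fun i : Fin (n + 1) => (c i, i)) ∘ (Equiv.addRight (1 : Fin (n + 1))) := by
      funext i
      simp only [Function.comp, Equiv.coe_addRight]
      by_cases h : i = Fin.last n
      · subst h
        simp [Fin.last_add_one]
      · rw [if_neg h]
    rw [Function.comp_assoc, this, ← PMF.map_comp, uniform_map_equiv]
  · subst hω
    rw [PMF.map_comp, PMF.map_comp, PMF.map_comp,
      show ((do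
          let a ← uniformOfFintype (Fin (n + 1))
          Pure.pure ((a : Fin (n + 1)) : ℕ)) : PMF ℕ) =
        PMF.map (fun a : Fin (n + 1) => (a : ℕ)) (uniformOfFintype (Fin (n + 1))) from rfl,
      PMF.map_comp]
    refine congrArg (fun f => PMF.map f (uniformOfFintype (Fin (n + 1)))) (funext fun i => ?_)
    simp only [Function.comp]
    by_cases h : i = Fin.last n
    · subst h; simp [Fin.last]
    · rw [if_neg h, if_neg (fun hn => h (Fin.ext (by simpa using hn)))]
end
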